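/- Let ρ_τ(x) = x²(τ − 1{x<0}) (with the convention that the loss is x²·τ for x ≥ 0 and x²·(1−τ) for x < 0), and let W ~ N(0, σ²). Then E[ρ_τ(ξ − W)] = (2τ−1)ξ²Φ(ξ;0,σ²) + (2τ−1)σ² ξ φ(ξ;0,σ²) + (2τ−1)σ² Φ(ξ;0,σ²) + (1−τ)(ξ² + σ²), for any real ξ. -/

import Mathlib

open MeasureTheory Real

/-- The `N(0, σ²)` density. -/
noncomputable def gpdf (s2 x : ℝ) : ℝ :=
  (Real.sqrt (2 * Real.pi * s2))⁻¹ * Real.exp (-(x ^ 2) / (2 * s2))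

/-- The `N(0, σ²)` cumulative distribution function. -/
noncomputable def gcdf (s2 x : ℝ) : ℝ := ∫ t in Set.Iic x, gpdf s2 t

/-- The expectile-regression asymmetric squared loss: `x²·τ` for `x ≥ 0` and
`x²·(1−τ)` for `x < 0`. -/
noncomputable def expectileLoss (τ x : ℝ) : ℝ := x ^ 2 * (if x < 0 then 1 - τ else τ)

/-!
On `w ≤ ξ` the loss `ρ_τ(ξ - w)` is `τ (ξ - w)²`, on `w > ξ` it is `(1 - τ)(ξ - w)²`. Since
`φ' = -(w/σ²) φ`, the function `(ξ² + σ²) Φ(w) + σ² (2ξ - w) φ(w)` is a primitive of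
`(ξ - w)² φ(w)`; it tends to `0` at `-∞` and to `ξ² + σ²` at `+∞`, which evaluates both
half-line integrals.
-/

open Filter Set Polynomial ProbabilityTheory Topology

theorem hasDerivAt_integral_Iic {E : Type*} [NormedAddCommGroup E] [NormedSpace ℝ E]
    [CompleteSpace E] {f : ℝ → E} (hf : Integrable f) (hfc : Continuous f) (x : ℝ) :
    HasDerivAt (fun y => ∫ t in Iic y, f t) (f x) x := by
  have hsplit : (fun y => ∫ t in Iic y, f t) = fun y => (∫ t in Iic 0, f t) + ∫ t in 0..y, f t :=
    funext fun y => by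
      rw [← intervalIntegral.integral_Iic_sub_Iic hf.integrableOn hf.integrableOn,
        add_sub_cancel]
  rw [hsplit]
  exact (hfc.integral_hasStrictDerivAt 0 x).hasDerivAt.const_add _

theorem integral_expectileLoss_sub_mul {f : ℝ → ℝ} (τ ξ : ℝ)
    (hf : Integrable fun w => (ξ - w) ^ 2 * f w) :
    ∫ w, expectileLoss τ (ξ - w) * f w
      = τ * (∫ w in Iic ξ, (ξ - w) ^ 2 * f w) + (1 - τ) * ∫ w in Ioi ξ, (ξ - w) ^ 2 * f w := by
  have hIic : EqOn (fun w => expectileLoss τ (ξ - w) * f w)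
      (fun w => τ * ((ξ - w) ^ 2 * f w)) (Iic ξ) := fun w hw => by
    simp only [expectileLoss, if_neg (not_lt.2 (sub_nonneg.2 (mem_Iic.1 hw)))]
    ring
  have hIoi : EqOn (fun w => expectileLoss τ (ξ - w) * f w)
      (fun w => (1 - τ) * ((ξ - w) ^ 2 * f w)) (Ioi ξ) := fun w hw => by
    simp only [expectileLoss, if_pos (sub_neg.2 (mem_Ioi.1 hw))]
    ring
  rw [← intervalIntegral.integral_Iic_add_Ioi
      ((hf.const_mul τ).integrableOn.congr_fun hIic.symm measurableSet_Iic)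
      ((hf.const_mul (1 - τ)).integrableOn.congr_fun hIoi.symm measurableSet_Ioi),
    setIntegral_congr_fun measurableSet_Iic hIic, setIntegral_congr_fun measurableSet_Ioi hIoi]
  simp only [integral_const_mul]

section Gaussian

variable {s2 : ℝ}

theorem gpdf_eq_gaussianPDFReal (hs2 : 0 ≤ s2) : gpdf s2 = gaussianPDFReal 0 s2.toNNReal := by
  ext x
  simp [gpdf, gaussianPDFReal, Real.coe_toNNReal _ hs2]

theorem gcdf_eq_cdf_gaussianReal (hs2 : 0 < s2) : gcdf s2 = cdf (gaussianReal 0 s2.toNNReal) := by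
  ext x
  rw [cdf_eq_real, measureReal_def, gaussianReal_apply_eq_integral _ (by simpa using hs2),
    ENNReal.toReal_ofReal (setIntegral_nonneg measurableSet_Iic fun t _ =>
      gaussianPDFReal_nonneg _ _ _), gcdf, gpdf_eq_gaussianPDFReal hs2.le]

theorem tendsto_gcdf_atBot (hs2 : 0 < s2) : Tendsto (gcdf s2) atBot (𝓝 0) := by
  rw [gcdf_eq_cdf_gaussianReal hs2]
  exact tendsto_cdf_atBot _

theorem tendsto_gcdf_atTop (hs2 : 0 < s2) : Tendsto (gcdf s2) atTop (𝓝 1) := by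
  rw [gcdf_eq_cdf_gaussianReal hs2]
  exact tendsto_cdf_atTop _

theorem gpdf_eq_mul_exp (s2 x : ℝ) :
    gpdf s2 x = (√(2 * π * s2))⁻¹ * rexp (-(2 * s2)⁻¹ * x ^ 2) := by
  rw [gpdf, neg_div, div_eq_inv_mul, neg_mul]

theorem integrable_pow_mul_gpdf (hs2 : 0 < s2) (n : ℕ) :
    Integrable fun x => x ^ n * gpdf s2 x := by
  have h := (integrable_rpow_mul_exp_neg_mul_sq (b := (2 * s2)⁻¹) (by positivity)
    (s := n) (by linarith [n.cast_nonneg (α := ℝ)])).const_mul (√(2 * π * s2))⁻¹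
  simp only [Real.rpow_natCast] at h
  refine h.congr (ae_of_all _ fun x => ?_)
  simp only [gpdf_eq_mul_exp]
  ring

theorem integrable_eval_mul_gpdf (hs2 : 0 < s2) (p : ℝ[X]) :
    Integrable fun x => p.eval x * gpdf s2 x := by
  simp_rw [eval_eq_sum_range, Finset.sum_mul, mul_assoc]
  exact integrable_finsetSum _ fun n _ => (integrable_pow_mul_gpdf hs2 n).const_mul _

theorem continuous_gpdf (s2 : ℝ) : Continuous (gpdf s2) := by
  unfold gpdf
  fun_prop

theorem hasDerivAt_gcdf (hs2 : 0 < s2) (x : ℝ) : HasDerivAt (gcdf s2) (gpdf s2 x) x :=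
  hasDerivAt_integral_Iic (by simpa using integrable_pow_mul_gpdf hs2 0) (continuous_gpdf s2) x

theorem hasDerivAt_gpdf (hs2 : s2 ≠ 0) (x : ℝ) :
    HasDerivAt (gpdf s2) (-(x / s2) * gpdf s2 x) x := by
  have hexponent : HasDerivAt (fun y => -(y ^ 2) / (2 * s2)) (-(2 * x) / (2 * s2)) x := by
    simpa using ((hasDerivAt_pow 2 x).neg).div_const (2 * s2)
  refine (hexponent.exp.const_mul (√(2 * π * s2))⁻¹).congr_deriv ?_
  rw [gpdf]
  field_simp

theorem hasDerivAt_eval_mul_gpdf (hs2 : s2 ≠ 0) (p : ℝ[X]) (x : ℝ) :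
    HasDerivAt (fun x => p.eval x * gpdf s2 x)
      ((derivative p - C s2⁻¹ * X * p).eval x * gpdf s2 x) x := by
  refine ((p.hasDerivAt x).mul (hasDerivAt_gpdf hs2 x)).congr_deriv ?_
  simp only [eval_sub, eval_mul, eval_C, eval_X]
  ring

theorem tendsto_eval_mul_gpdf_atTop (hs2 : 0 < s2) (p : ℝ[X]) :
    Tendsto (fun x => p.eval x * gpdf s2 x) atTop (𝓝 0) :=
  tendsto_zero_of_hasDerivAt_of_integrableOn_Ioi (a := 0)
    (fun x _ => hasDerivAt_eval_mul_gpdf hs2.ne' p x)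
    (integrable_eval_mul_gpdf hs2 _).integrableOn (integrable_eval_mul_gpdf hs2 p).integrableOn

theorem tendsto_eval_mul_gpdf_atBot (hs2 : 0 < s2) (p : ℝ[X]) :
    Tendsto (fun x => p.eval x * gpdf s2 x) atBot (𝓝 0) :=
  tendsto_zero_of_hasDerivAt_of_integrableOn_Iic (a := 0)
    (fun x _ => hasDerivAt_eval_mul_gpdf hs2.ne' p x)
    (integrable_eval_mul_gpdf hs2 _).integrableOn (integrable_eval_mul_gpdf hs2 p).integrableOn

theorem integrable_sq_sub_mul_gpdf (hs2 : 0 < s2) (ξ : ℝ) :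
    Integrable fun w => (ξ - w) ^ 2 * gpdf s2 w :=
  (integrable_eval_mul_gpdf hs2 ((C ξ - X) ^ 2)).congr (ae_of_all _ fun w => by simp)

theorem hasDerivAt_sq_sub_mul_gpdf_primitive (hs2 : 0 < s2) (ξ w : ℝ) :
    HasDerivAt (fun w => (ξ ^ 2 + s2) * gcdf s2 w + s2 * ((2 * ξ - w) * gpdf s2 w))
      ((ξ - w) ^ 2 * gpdf s2 w) w := by
  refine (((hasDerivAt_gcdf hs2 w).const_mul _).add ((((hasDerivAt_id' w).const_sub (2 * ξ)).mul
    (hasDerivAt_gpdf hs2.ne' w)).const_mul s2)).congr_deriv ?_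
  field_simp
  ring

theorem setIntegral_Iic_sq_sub_mul_gpdf (hs2 : 0 < s2) (ξ : ℝ) :
    ∫ w in Iic ξ, (ξ - w) ^ 2 * gpdf s2 w = (ξ ^ 2 + s2) * gcdf s2 ξ + s2 * ξ * gpdf s2 ξ := by
  have hlim : Tendsto (fun w => (ξ ^ 2 + s2) * gcdf s2 w + s2 * ((2 * ξ - w) * gpdf s2 w))
      atBot (𝓝 0) := by
    have hdecay : Tendsto (fun w => (2 * ξ - w) * gpdf s2 w) atBot (𝓝 0) :=
      (tendsto_eval_mul_gpdf_atBot hs2 (C (2 * ξ) - X)).congr fun w => by simp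
    simpa using ((tendsto_gcdf_atBot hs2).const_mul (ξ ^ 2 + s2)).add (hdecay.const_mul s2)
  rw [integral_Iic_of_hasDerivAt_of_tendsto'
    (fun w _ => hasDerivAt_sq_sub_mul_gpdf_primitive hs2 ξ w)
    (integrable_sq_sub_mul_gpdf hs2 ξ).integrableOn hlim]
  ring

theorem setIntegral_Ioi_sq_sub_mul_gpdf (hs2 : 0 < s2) (ξ : ℝ) :
    ∫ w in Ioi ξ, (ξ - w) ^ 2 * gpdf s2 w
      = (ξ ^ 2 + s2) * (1 - gcdf s2 ξ) - s2 * ξ * gpdf s2 ξ := by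
  have hlim : Tendsto (fun w => (ξ ^ 2 + s2) * gcdf s2 w + s2 * ((2 * ξ - w) * gpdf s2 w))
      atTop (𝓝 (ξ ^ 2 + s2)) := by
    have hdecay : Tendsto (fun w => (2 * ξ - w) * gpdf s2 w) atTop (𝓝 0) :=
      (tendsto_eval_mul_gpdf_atTop hs2 (C (2 * ξ) - X)).congr fun w => by simp
    simpa using ((tendsto_gcdf_atTop hs2).const_mul (ξ ^ 2 + s2)).add (hdecay.const_mul s2)
  rw [integral_Ioi_of_hasDerivAt_of_tendsto'
    (fun w _ => hasDerivAt_sq_sub_mul_gpdf_primitive hs2 ξ w)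
    (integrable_sq_sub_mul_gpdf hs2 ξ).integrableOn hlim]
  ring

end Gaussian

theorem expectile_loss_gaussian_general (τ : ℝ) (s2 : ℝ) (hs2 : 0 < s2)
    (ξ : ℝ) :
    ∫ w : ℝ, expectileLoss τ (ξ - w) * gpdf s2 w
      = (2 * τ - 1) * ξ ^ 2 * gcdf s2 ξ + (2 * τ - 1) * s2 * ξ * gpdf s2 ξ
        + (2 * τ - 1) * s2 * gcdf s2 ξ + (1 - τ) * (ξ ^ 2 + s2) := by
  rw [integral_expectileLoss_sub_mul τ ξ (integrable_sq_sub_mul_gpdf hs2 ξ),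
    setIntegral_Iic_sq_sub_mul_gpdf hs2, setIntegral_Ioi_sq_sub_mul_gpdf hs2]
  ring

/-- For `W ~ N(0, σ²)` with `σ² > 0` and `τ ∈ (0,1)`, for any real `ξ`,
`E[ρ_τ(ξ − W)] = (2τ−1)ξ²Φ(ξ;0,σ²) + (2τ−1)σ² ξ φ(ξ;0,σ²)
  + (2τ−1)σ² Φ(ξ;0,σ²) + (1−τ)(ξ² + σ²)`. -/
theorem expectile_loss_gaussian (τ : ℝ) (hτ : τ ∈ Set.Ioo (0:ℝ) 1) (s2 : ℝ) (hs2 : 0 < s2)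
    (ξ : ℝ) :
    ∫ w : ℝ, expectileLoss τ (ξ - w) * gpdf s2 w
      = (2 * τ - 1) * ξ ^ 2 * gcdf s2 ξ + (2 * τ - 1) * s2 * ξ * gpdf s2 ξ
        + (2 * τ - 1) * s2 * gcdf s2 ξ + (1 - τ) * (ξ ^ 2 + s2) :=
  expectile_loss_gaussian_general τ s2 hs2 ξ
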